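/- Let X = I₀(f), Y = I₀(g) be free Wigner integrals with f ∈ L²(ℝ₊^m), g ∈ L²(ℝ₊^n) mirror symmetric. Then 4·Cov(X²,Y²) := 4(τ₀(X²Y²) − τ₀(X²)τ₀(Y²)) = 4·Σ_{k=1}^{m∧n} ‖f ⌢ₖ g‖²; in particular Cov(X²,Y²) ≥ 0. -/

import Mathlib

open MeasureTheory Finset Filter

noncomputable section

/-- The positive orthant in `ℝ^p`. -/
def posOrth (p : ℕ) : Set (Fin p → ℝ) := {t | ∀ i, 0 ≤ t i}

/-- The involution `h*(t₁,...,t_p) = conj (h (t_p,...,t₁))`. -/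
def mstar {p : ℕ} (f : (Fin p → ℝ) → ℂ) : (Fin p → ℝ) → ℂ :=
  fun t => starRingEnd ℂ (f (fun i => t (Fin.rev i)))

/-- The `L²(ℝ₊^p)` inner product `⟨u,v⟩ = ∫ u ⬝ conj v`. -/
def ip (p : ℕ) (u v : (Fin p → ℝ) → ℂ) : ℂ :=
  ∫ t in posOrth p, u t * starRingEnd ℂ (v t)

/-- Elementary tensor `(f ⊗ g)(t,r) = f(t) g(r)`. -/
def tens (m n : ℕ) (f : (Fin m → ℝ) → ℂ) (g : (Fin n → ℝ) → ℂ) :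
    (Fin (m + n) → ℝ) → ℂ :=
  fun x => f (fun i => x (Fin.castAdd n i)) * g (fun j => x (Fin.natAdd m j))

/-- The `k`-th contraction
`(f ⌢ₖ g)(t⃗,r⃗) = ∫ f(t⃗,s₁,...,s_k) g(s_k,...,s₁,r⃗) ds⃗` over the positive orthant. -/
def contr (m n k : ℕ) (f : (Fin m → ℝ) → ℂ) (g : (Fin n → ℝ) → ℂ) :
    (Fin (m + n - 2 * k) → ℝ) → ℂ :=
  if hc : k ≤ m ∧ k ≤ n then
    fun x => ∫ s : Fin k → ℝ in posOrth k,
      f (fun i => if h : (i : ℕ) < m - k then x ⟨i, by have := i.isLt; omega⟩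
          else s ⟨(i : ℕ) - (m - k), by have := i.isLt; omega⟩) *
      g (fun j => if h : (j : ℕ) < k then s ⟨k - 1 - (j : ℕ), by omega⟩
          else x ⟨(m - k) + ((j : ℕ) - k), by have := j.isLt; omega⟩)
  else 0

/-- Permutation action on kernels: `(π ⬝ f)(t⃗) = f(π⁻¹(t⃗))` where `π⁻¹(t⃗)ᵢ = t_{π(i)}`. -/
def permAct {p : ℕ} (π : Equiv.Perm (Fin p)) (f : (Fin p → ℝ) → ℂ) : (Fin p → ℝ) → ℂ :=
  fun t => f (fun i => t (π i))

/-- Number of inversions of a permutation. -/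
def invNum {p : ℕ} (π : Equiv.Perm (Fin p)) : ℕ :=
  (Finset.univ.filter fun ij : Fin p × Fin p => ij.1 < ij.2 ∧ π ij.2 < π ij.1).card

/-- The `q`-integer `[j]_q = 1 + q + ... + q^(j-1)`. -/
def qint (q : ℝ) (j : ℕ) : ℝ := ∑ i ∈ Finset.range j, q ^ i

/-- The `q`-factorial `[m]_q!`. -/
def qfact (q : ℝ) (m : ℕ) : ℝ := ∏ j ∈ Finset.range m, qint q (j + 1)

/-- The `q`-symmetrizer `P_q^{(p)} = Σ_π q^{inv π} π`. -/
def Pq (q : ℝ) (p : ℕ) (f : (Fin p → ℝ) → ℂ) : (Fin p → ℝ) → ℂ :=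
  ∑ π : Equiv.Perm (Fin p), (q ^ invNum π : ℝ) • permAct π f

/-- The minimal-inversion representatives of `S_p/(S_k × S_{p-k})`, i.e. the `(k,p-k)`-shuffles:
permutations increasing on `{0,...,k-1}` and on `{k,...,p-1}`. -/
def shuffles (k p : ℕ) : Finset (Equiv.Perm (Fin p)) :=
  Finset.univ.filter fun π => ∀ i j : Fin p, i < j →
    ((j : ℕ) < k ∨ k ≤ (i : ℕ)) → π i < π j

/-- The Gaussian binomial coefficient `binom(p,k)_q` as a shuffle sum. -/
def gaussBinom (q : ℝ) (p k : ℕ) : ℝ := ∑ π ∈ shuffles k p, q ^ invNum π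

/-- The adjoint `R*_{k,p} = Σ_{shuffles} q^{inv π} π⁻¹`. -/
def Rstar (q : ℝ) (k p : ℕ) (f : (Fin p → ℝ) → ℂ) : (Fin p → ℝ) → ℂ :=
  ∑ π ∈ shuffles k p, (q ^ invNum π : ℝ) • permAct π⁻¹ f

/-- The `q`-contraction `f ⌢ₖ_q g = (1 ⊗ Φₖ^q ⊗ 1)((R*_{m-k,m} f) ⊗ (R*_{k,n} g))`, where
`Φₖ^q(a ⊗ b) = ⟨a, b*⟩_q = ⟨a, P_q^{(k)} b*⟩`. -/
def qcontr (q : ℝ) (m n k : ℕ) (f : (Fin m → ℝ) → ℂ) (g : (Fin n → ℝ) → ℂ) :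
    (Fin (m + n - 2 * k) → ℝ) → ℂ :=
  if hc : k ≤ m ∧ k ≤ n then
    fun x => ∫ s : Fin k → ℝ in posOrth k,
      (Rstar q (m - k) m f)
        (fun i => if h : (i : ℕ) < m - k then x ⟨i, by have := i.isLt; omega⟩
            else s ⟨(i : ℕ) - (m - k), by have := i.isLt; omega⟩) *
      starRingEnd ℂ
        ((Pq q k (mstar (fun s' : Fin k → ℝ =>
            (Rstar q k n g)
              (fun j => if h : (j : ℕ) < k then s' ⟨(j : ℕ), h⟩
                  else x ⟨(m - k) + ((j : ℕ) - k), by have := j.isLt; omega⟩)))) s)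
  else 0
section Aux

/-- From mirror symmetry: `conj (f w) = f (w ∘ rev)`. -/
lemma mstar_conj {p : ℕ} {f : (Fin p → ℝ) → ℂ} (hf : mstar f = f) (w : Fin p → ℝ) :
    starRingEnd ℂ (f w) = f (fun i => w (Fin.rev i)) := by
  conv_rhs => rw [← hf]
  simp [mstar, Fin.rev_rev]

lemma I_cast {A : Type*} [Ring A] (I : ∀ p : ℕ, ((Fin p → ℝ) → ℂ) → A) {p q : ℕ} (h : p = q)
    (u : (Fin p → ℝ) → ℂ) :
    I p u = I q (fun x => u (fun i => x (Fin.cast h i))) := by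
  subst h; rfl

/-- Key symmetry: conjugate-reversal of `g ⌢ₖ f` is `f ⌢ₖ g`. -/
lemma contr_symm {m n k : ℕ} (hkm : k ≤ m) (hkn : k ≤ n)
    {f : (Fin m → ℝ) → ℂ} {g : (Fin n → ℝ) → ℂ}
    (hf : mstar f = f) (hg : mstar g = g)
    (h : n + m - 2 * k = m + n - 2 * k) (x : Fin (m + n - 2 * k) → ℝ) :
    starRingEnd ℂ (contr n m k g f (fun i => x (Fin.rev (Fin.cast h i)))) =
      contr m n k f g x := by
  rw [contr, contr, dif_pos ⟨hkn, hkm⟩, dif_pos ⟨hkm, hkn⟩, ← integral_conj]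
  congr 1
  funext s
  rw [map_mul, mstar_conj hg, mstar_conj hf, mul_comm]
  congr 1
  · congr 1
    funext i
    have hi2 := i.isLt
    simp only [Fin.val_rev]
    rcases Nat.lt_or_ge (i : ℕ) (m - k) with hi | hi
    · rw [dif_neg (by omega), dif_pos hi]
      refine congrArg x (Fin.ext ?_)
      simp only [Fin.val_rev, Fin.coe_cast]
      omega
    · rw [dif_pos (by omega), dif_neg (by omega)]
      exact congrArg s (Fin.mk_eq_mk.mpr (by omega))
  · congr 1
    funext j
    have hj2 := j.isLt
    simp only [Fin.val_rev]
    rcases Nat.lt_or_ge (j : ℕ) k with hj | hj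
    · rw [dif_neg (by omega), dif_pos hj]
      exact congrArg s (Fin.mk_eq_mk.mpr (by omega))
    · rw [dif_pos (by omega), dif_neg (by omega)]
      refine congrArg x (Fin.ext ?_)
      simp only [Fin.val_rev, Fin.coe_cast]
      omega

end Aux
section Aux2

lemma posOrth_zero : posOrth 0 = Set.univ :=
  Set.eq_univ_iff_forall.mpr fun t i => i.elim0

lemma contr_zero (m n : ℕ) (f : (Fin m → ℝ) → ℂ) (g : (Fin n → ℝ) → ℂ)
    (x : Fin (m + n - 2 * 0) → ℝ) :
    contr m n 0 f g x =
      f (fun i => x ⟨(i : ℕ), by have := i.isLt; omega⟩) *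
        g (fun j => x ⟨m + (j : ℕ), by have := j.isLt; omega⟩) := by
  rw [contr, dif_pos ⟨Nat.zero_le m, Nat.zero_le n⟩]
  rw [posOrth_zero, Measure.restrict_univ]
  rw [show (volume : Measure (Fin 0 → ℝ)) = Measure.pi (fun _ => volume) from rfl,
    Measure.pi_of_empty, integral_dirac]
  refine congrArg₂ (· * ·) ?_ ?_
  · exact congrArg f (funext fun i => by rw [dif_pos (by have := i.isLt; omega : (i:ℕ) < m - 0)])
  · exact congrArg g (funext fun j => by rw [dif_neg (by omega : ¬ ((j:ℕ) < 0))]; exact congrArg x (Fin.mk_eq_mk.mpr (by omega)))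


end Aux2
section Aux3

open MeasurableEquiv in
lemma ip_zero (m n : ℕ) (f : (Fin m → ℝ) → ℂ) (g : (Fin n → ℝ) → ℂ) :
    ip (m + n - 2 * 0) (contr m n 0 f g) (contr m n 0 f g) = ip m f f * ip n g g := by
  classical
  set T : ((Fin m → ℝ) × (Fin n → ℝ)) ≃ᵐ (Fin (m + n) → ℝ) :=
    ((sumPiEquivProdPi (fun _ : Fin m ⊕ Fin n => ℝ)).symm).trans
      (piCongrLeft (fun _ => ℝ) finSumFinEquiv) with hTdef
  have hT : MeasurePreserving T volume volume := by
    have h1 := MeasureTheory.volume_measurePreserving_sumPiEquivProdPi_symm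
      (fun _ : Fin m ⊕ Fin n => ℝ)
    have h2 := MeasureTheory.volume_measurePreserving_piCongrLeft
      (fun _ : Fin (m + n) => ℝ) finSumFinEquiv
    exact h2.comp h1
  have hTl : ∀ (a : Fin m → ℝ) (b : Fin n → ℝ) (i : Fin m),
      T (a, b) (finSumFinEquiv (Sum.inl i)) = a i := fun a b i =>
    Equiv.piCongrLeft_sumInl (fun _ => ℝ) finSumFinEquiv a b i
  have hTr : ∀ (a : Fin m → ℝ) (b : Fin n → ℝ) (j : Fin n),
      T (a, b) (finSumFinEquiv (Sum.inr j)) = b j := fun a b j =>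
    Equiv.piCongrLeft_sumInr (fun _ => ℝ) finSumFinEquiv a b j
  have hpre : T ⁻¹' posOrth (m + n) = (posOrth m) ×ˢ (posOrth n) := by
    ext z
    obtain ⟨a, b⟩ := z
    simp only [Set.mem_preimage, posOrth, Set.mem_setOf_eq, Set.mem_prod]
    constructor
    · intro hall
      exact ⟨fun i => by rw [← hTl a b i]; exact hall _,
             fun j => by rw [← hTr a b j]; exact hall _⟩
    · rintro ⟨ha, hb⟩ i
      rcases hi : finSumFinEquiv.symm i with u | u
      · have : i = finSumFinEquiv (Sum.inl u) := by
          rw [← hi, Equiv.apply_symm_apply]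
        rw [this, hTl]; exact ha u
      · have : i = finSumFinEquiv (Sum.inr u) := by
          rw [← hi, Equiv.apply_symm_apply]
        rw [this, hTr]; exact hb u
  show (∫ t in posOrth (m + n),
      contr m n 0 f g t * starRingEnd ℂ (contr m n 0 f g t)) = _
  have step1 : (∫ t in posOrth (m + n),
      contr m n 0 f g t * starRingEnd ℂ (contr m n 0 f g t)) =
      ∫ z in T ⁻¹' posOrth (m + n),
        contr m n 0 f g (T z) * starRingEnd ℂ (contr m n 0 f g (T z)) :=
    (hT.setIntegral_preimage_emb T.measurableEmbedding _ _).symm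
  rw [step1, hpre]
  have hval : ∀ z : (Fin m → ℝ) × (Fin n → ℝ),
      contr m n 0 f g (T z) * starRingEnd ℂ (contr m n 0 f g (T z)) =
        (f z.1 * starRingEnd ℂ (f z.1)) * (g z.2 * starRingEnd ℂ (g z.2)) := by
    rintro ⟨a, b⟩
    rw [contr_zero]
    have h1 : (fun i : Fin m => T (a, b) ⟨(i : ℕ), by have := i.isLt; omega⟩) = a := by
      funext i
      have : (⟨(i : ℕ), by have := i.isLt; omega⟩ : Fin (m + n)) =
          finSumFinEquiv (Sum.inl i) := by
        rw [finSumFinEquiv_apply_left]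
        exact Fin.mk_eq_mk.mpr (by simp)
      rw [this, hTl]
    have h2 : (fun j : Fin n => T (a, b) ⟨m + (j : ℕ), by have := j.isLt; omega⟩) = b := by
      funext j
      have : (⟨m + (j : ℕ), by have := j.isLt; omega⟩ : Fin (m + n)) =
          finSumFinEquiv (Sum.inr j) := by
        rw [finSumFinEquiv_apply_right]
        exact Fin.mk_eq_mk.mpr (by simp)
      rw [this, hTr]
    rw [h1, h2, map_mul]
    ring
  simp_rw [hval]
  rw [show (volume : Measure ((Fin m → ℝ) × (Fin n → ℝ))) =
    (volume : Measure (Fin m → ℝ)).prod (volume : Measure (Fin n → ℝ)) from rfl]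
  exact setIntegral_prod_mul (fun a => f a * starRingEnd ℂ (f a))
    (fun b => g b * starRingEnd ℂ (g b)) _ _

lemma ip_self (p : ℕ) (u : (Fin p → ℝ) → ℂ) :
    ip p u u = ((∫ t in posOrth p, Complex.normSq (u t)) : ℝ) := by
  rw [ip]
  simp_rw [Complex.mul_conj]
  exact integral_ofReal

lemma ip_self_re_nonneg (p : ℕ) (u : (Fin p → ℝ) → ℂ) : 0 ≤ (ip p u u).re := by
  rw [ip_self, Complex.ofReal_re]
  exact integral_nonneg fun t => Complex.normSq_nonneg _

end Aux3

end
/-- for free Wigner integrals `X = I₀(f)`, `Y = I₀(g)` with mirror symmetric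
kernels, `4 Cov(X²,Y²) = 4 Σ_{k=1}^{m∧n} ‖f ⌢ₖ g‖² ≥ 0`. -/
theorem free_covariance_contractions {A : Type*} [Ring A] [Algebra ℂ A]
    (τ : A →ₗ[ℂ] ℂ)
    (htr : ∀ a b : A, τ (a * b) = τ (b * a))
    (I : ∀ p : ℕ, ((Fin p → ℝ) → ℂ) → A)
    (hprod : ∀ (p r : ℕ) (u : (Fin p → ℝ) → ℂ) (v : (Fin r → ℝ) → ℂ),
      I p u * I r v = ∑ k ∈ Finset.range (min p r + 1), I (p + r - 2 * k) (contr p r k u v))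
    (hpair : ∀ (p : ℕ) (u v : (Fin p → ℝ) → ℂ), τ (I p u * I p v) = ip p u (mstar v))
    (horth : ∀ (p r : ℕ) (u : (Fin p → ℝ) → ℂ) (v : (Fin r → ℝ) → ℂ),
      p ≠ r → τ (I p u * I r v) = 0)
    (hvac : ∀ (p : ℕ) (u : (Fin p → ℝ) → ℂ), 1 ≤ p → τ (I p u) = 0)
    (m n : ℕ) (hm : 1 ≤ m) (hn : 1 ≤ n)
    (f : (Fin m → ℝ) → ℂ) (g : (Fin n → ℝ) → ℂ)
    (hf2 : MemLp f 2 (volume.restrict (posOrth m)))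
    (hg2 : MemLp g 2 (volume.restrict (posOrth n)))
    (hf : mstar f = f) (hg : mstar g = g) :
    (4 * (τ (I m f ^ 2 * I n g ^ 2) - τ (I m f ^ 2) * τ (I n g ^ 2)) =
      4 * ∑ k ∈ Finset.Icc 1 (min m n),
        ip (m + n - 2 * k) (contr m n k f g) (contr m n k f g)) ∧
    0 ≤ (τ (I m f ^ 2 * I n g ^ 2) - τ (I m f ^ 2) * τ (I n g ^ 2)).re := by
  have hXX : τ (I m f ^ 2) = ip m f f := by rw [sq, hpair, hf]
  have hYY : τ (I n g ^ 2) = ip n g g := by rw [sq, hpair, hg]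
  have hmin1 : min m n ≤ m := Nat.min_le_left m n
  have hmin2 : min m n ≤ n := Nat.min_le_right m n
  have key : τ (I m f ^ 2 * I n g ^ 2) =
      ∑ k ∈ Finset.range (min m n + 1),
        ip (m + n - 2 * k) (contr m n k f g) (contr m n k f g) := by
    have h1 : I m f ^ 2 * I n g ^ 2 = (I m f) * ((I m f) * I n g ^ 2) := by noncomm_ring
    rw [h1, htr, show (I m f * I n g ^ 2) * I m f = (I m f * I n g) * (I n g * I m f) by noncomm_ring]
    rw [hprod m n f g, hprod n m g f, Finset.sum_mul_sum, map_sum]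
    simp_rw [map_sum]
    refine Finset.sum_congr rfl fun k hk => ?_
    simp only [Finset.mem_range] at hk
    have hkm : k ≤ m := by omega
    have hkn : k ≤ n := by omega
    rw [Finset.sum_eq_single k]
    · have hnm : n + m - 2 * k = m + n - 2 * k := by omega
      rw [I_cast I hnm (contr n m k g f), hpair]
      congr 1
      funext x
      exact contr_symm hkm hkn hf hg hnm x
    · intro l hl hlk
      apply horth
      simp only [Finset.mem_range] at hl
      have h3 := Nat.min_le_left n m
      have h4 := Nat.min_le_right n m
      omega
    · intro hk'
      exact absurd (Finset.mem_range.mpr (by rw [Nat.min_comm]; omega)) hk'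
  have hsplit : Finset.range (min m n + 1) = insert 0 (Finset.Icc 1 (min m n)) := by
    ext a; simp only [Finset.mem_range, Finset.mem_insert, Finset.mem_Icc]; omega
  rw [hsplit, Finset.sum_insert (by simp), ip_zero] at key
  have hcov : τ (I m f ^ 2 * I n g ^ 2) - τ (I m f ^ 2) * τ (I n g ^ 2) =
      ∑ k ∈ Finset.Icc 1 (min m n),
        ip (m + n - 2 * k) (contr m n k f g) (contr m n k f g) := by
    rw [key, hXX, hYY]; ring
  refine ⟨by rw [hcov], ?_⟩
  rw [hcov, Complex.re_sum]
  exact Finset.sum_nonneg fun k _ => ip_self_re_nonneg _ _
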